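/- arXiv:1104.1264 — 4 statements merged into one kernel-verified Lean document; each statement's English description precedes it below -/
import Mathlib

section
/- Let g : [0,1] → [0,1] be weakly increasing with g(x) ≥ x for all x. Then the relation x ≺ y defined by g(x) < y is a strict partial order on [0,1] that contains no induced copy of the poset 2+2 (i.e., there are no x₁ ≺ x₂ and x₃ ≺ x₄ with x₁ ⊀ x₄, x₃ ⊀ x₂) and no induced copy of 3+1 (i.e., there are no x₁ ≺ x₂ ≺ x₃ and w incomparable to each of x₁, x₂, x₃). -/
/-- For weakly increasing `g : [0,1] → [0,1]` with `g(x) ≥ x`, the relation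
`x ≺ y ↔ g(x) < y` is a strict partial order on [0,1] with no induced 2+2 and
no induced 3+1. -/
theorem semiorder_of_increasing_g
    (g : Set.Icc (0:ℝ) 1 → Set.Icc (0:ℝ) 1)
    (hmono : ∀ x y : Set.Icc (0:ℝ) 1, x ≤ y → g x ≤ g y)
    (hge : ∀ x : Set.Icc (0:ℝ) 1, (x : ℝ) ≤ g x) :
    (∀ x : Set.Icc (0:ℝ) 1, ¬ ((g x : ℝ) < (x : ℝ))) ∧
    (∀ x y z : Set.Icc (0:ℝ) 1,
      (g x : ℝ) < (y : ℝ) → (g y : ℝ) < (z : ℝ) → (g x : ℝ) < (z : ℝ)) ∧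
    (¬ ∃ x₁ x₂ x₃ x₄ : Set.Icc (0:ℝ) 1,
      (g x₁ : ℝ) < (x₂ : ℝ) ∧ (g x₃ : ℝ) < (x₄ : ℝ) ∧
      ¬ ((g x₁ : ℝ) < (x₄ : ℝ)) ∧ ¬ ((g x₃ : ℝ) < (x₂ : ℝ))) ∧
    (¬ ∃ x₁ x₂ x₃ w : Set.Icc (0:ℝ) 1,
      (g x₁ : ℝ) < (x₂ : ℝ) ∧ (g x₂ : ℝ) < (x₃ : ℝ) ∧
      (¬ ((g x₁ : ℝ) < (w : ℝ)) ∧ ¬ ((g w : ℝ) < (x₁ : ℝ))) ∧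
      (¬ ((g x₂ : ℝ) < (w : ℝ)) ∧ ¬ ((g w : ℝ) < (x₂ : ℝ))) ∧
      (¬ ((g x₃ : ℝ) < (w : ℝ)) ∧ ¬ ((g w : ℝ) < (x₃ : ℝ)))) := by
  refine ⟨fun x h => absurd (hge x) (not_le.mpr h), ?_, ?_, ?_⟩
  · intro x y z h1 h2
    exact h1.trans_le ((hge y).trans h2.le)
  · rintro ⟨x₁, x₂, x₃, x₄, h12, h34, h14, h32⟩
    push_neg at h14 h32
    exact absurd (h34.trans_le (h14.trans (h12.le.trans h32))) (lt_irrefl _)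
  · rintro ⟨x₁, x₂, x₃, w, h12, h23, ⟨h1w, hw1⟩, ⟨h2w, hw2⟩, ⟨h3w, hw3⟩⟩
    push_neg at h1w hw3
    have hwx2 : w ≤ x₂ := Subtype.coe_le_coe.mp (h1w.trans_lt h12).le
    have : (x₃ : ℝ) ≤ g x₂ := hw3.trans (Subtype.coe_le_coe.mpr (hmono _ _ hwx2))
    exact absurd h23 (not_lt.mpr this)
end

section
/- Let μ be a Borel probability measure on the triangle S_I = {(x,y) : 0 ≤ x ≤ y ≤ 1}, and let μ_R be its right marginal (the pushforward under (x,y) ↦ y). Define h̄⁺(x) = b_k if x ∈ (a_k, b_k] for some maximal open interval (a_k,b_k) of the complement [0,1] \ supp(μ_R), and h̄⁺(x) = x otherwise. Then μ({(x,y) ∈ S_I : y < h̄⁺(x)}) = 0; in particular, the pushforward of μ under (x,y) ↦ (h̄⁺(x), y) is again a probability measure on S_I. -/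
open MeasureTheory Classical

/-- The topological support of a Borel measure on ℝ. -/
def msupp (ν : Measure ℝ) : Set ℝ := {x | ∀ U : Set ℝ, IsOpen U → x ∈ U → 0 < ν U}

lemma msupp_compl_null (ν : Measure ℝ) : ν (msupp ν)ᶜ = 0 := by
  have hsub : (msupp ν)ᶜ ⊆ ⋃ q ∈ {q : ℚ × ℚ | ν (Set.Ioo (q.1 : ℝ) q.2) = 0},
      Set.Ioo (q.1 : ℝ) (q.2 : ℝ) := by
    intro x hx
    simp only [msupp, Set.mem_compl_iff, Set.mem_setOf_eq, not_forall] at hx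
    obtain ⟨U, hU, hxU, hν⟩ := hx
    push_neg at hν
    have hν0 : ν U = 0 := le_antisymm hν bot_le
    obtain ⟨a, b, ⟨ha, hb⟩, hUab⟩ := mem_nhds_iff_exists_Ioo_subset.mp (hU.mem_nhds hxU)
    obtain ⟨q, hq1, hq2⟩ := exists_rat_btwn ha
    obtain ⟨p, hp1, hp2⟩ := exists_rat_btwn hb
    refine Set.mem_biUnion (s := {q : ℚ × ℚ | ν (Set.Ioo (q.1 : ℝ) q.2) = 0}) (x := (q, p)) ?_ ?_
    · refine measure_mono_null (fun z hz => hUab ⟨lt_of_le_of_lt (le_of_lt hq1) hz.1,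
        lt_of_lt_of_le hz.2 (le_of_lt hp2)⟩) hν0
    · exact ⟨hq2, hp1⟩
  refine measure_mono_null hsub ?_
  exact (measure_biUnion_null_iff (Set.to_countable _)).mpr fun q hq => hq

lemma msupp_compl_open (ν : Measure ℝ) : IsOpen (msupp ν)ᶜ := by
  rw [isOpen_iff_mem_nhds]
  intro x hx
  simp only [msupp, Set.mem_compl_iff, Set.mem_setOf_eq, not_forall] at hx
  obtain ⟨U, hU, hxU, hν⟩ := hx
  refine Filter.mem_of_superset (hU.mem_nhds hxU) fun y hy => ?_
  simp only [msupp, Set.mem_compl_iff, Set.mem_setOf_eq, not_forall]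
  exact ⟨U, hU, hy, hν⟩

/-- `h̄_ν⁺(x)`: equals `b_k` if `x ∈ (a_k, b_k]` for a maximal open interval `(a_k, b_k)`
of `[0,1] \ supp ν`, and `x` otherwise.  Equivalently, `x` itself if `x ∈ supp ν` or
`x = 0`, and otherwise the first point of `supp ν` weakly to the right of `x`
(with the convention `inf ∅ = 1`). -/

noncomputable def bhplus (ν : Measure ℝ) (x : ℝ) : ℝ :=
  if x ∈ msupp ν ∨ x = 0 then x else sInf ({z | x ≤ z ∧ z ∈ msupp ν} ∪ {1})

/-- The triangle `S_I = {(x,y) : 0 ≤ x ≤ y ≤ 1}`. -/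
def triangleSI : Set (ℝ × ℝ) := {p | 0 ≤ p.1 ∧ p.1 ≤ p.2 ∧ p.2 ≤ 1}

/-- For a Borel probability measure μ on the triangle S_I with right marginal μ_R,
the set where `y < h̄⁺(x)` is μ-null; in particular the pushforward of μ under
`(x,y) ↦ (h̄⁺(x), y)` is again a probability measure on S_I. -/
theorem bhplus_pushforward (μ : Measure (ℝ × ℝ)) [IsProbabilityMeasure μ]
    (hμ : μ triangleSIᶜ = 0) :
    μ {p : ℝ × ℝ | p ∈ triangleSI ∧ p.2 < bhplus (μ.map Prod.snd) p.1} = 0 ∧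
    μ {p : ℝ × ℝ | (bhplus (μ.map Prod.snd) p.1, p.2) ∈ triangleSI} = 1 := by
  set ν := μ.map Prod.snd with hν
  -- key sublemma: on the triangle, y < bhplus x forces y ∉ msupp ν
  have key : ∀ p : ℝ × ℝ, p ∈ triangleSI → p.2 < bhplus ν p.1 → p.2 ∉ msupp ν := by
    rintro ⟨x, y⟩ ⟨hx0, hxy, hy1⟩ hlt hmem
    unfold bhplus at hlt
    split_ifs at hlt with h
    · exact absurd (lt_of_le_of_lt hxy hlt) (lt_irrefl x)
    · have hyS : y ∈ ({z | x ≤ z ∧ z ∈ msupp ν} ∪ {1} : Set ℝ) := Or.inl ⟨hxy, hmem⟩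
      have hbdd : BddBelow ({z | x ≤ z ∧ z ∈ msupp ν} ∪ {1} : Set ℝ) := by
        refine ⟨min x 1, ?_⟩
        rintro z (⟨hz, -⟩ | hz)
        · exact le_trans (min_le_left _ _) hz
        · simp_all
      exact absurd (csInf_le hbdd hyS) (not_le.mpr hlt)
  have hB : μ {p : ℝ × ℝ | p ∈ triangleSI ∧ p.2 < bhplus ν p.1} = 0 := by
    have hsub : {p : ℝ × ℝ | p ∈ triangleSI ∧ p.2 < bhplus ν p.1}
        ⊆ Prod.snd ⁻¹' (msupp ν)ᶜ := fun p ⟨h1, h2⟩ => key p h1 h2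
    refine measure_mono_null hsub ?_
    rw [← Measure.map_apply measurable_snd (msupp_compl_open ν).measurableSet]
    exact msupp_compl_null ν
  refine ⟨hB, ?_⟩
  set G := {p : ℝ × ℝ | (bhplus ν p.1, p.2) ∈ triangleSI}
  have h0le : ∀ x : ℝ, 0 ≤ x → 0 ≤ bhplus ν x := by
    intro x hx
    unfold bhplus
    split_ifs with h
    · exact hx
    · refine le_csInf ⟨1, Or.inr rfl⟩ ?_
      rintro z (⟨hz, -⟩ | hz)
      · exact le_trans hx hz
      · simp only [Set.mem_singleton_iff] at hz; rw [hz]; norm_num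
  have hGc : Gᶜ ⊆ {p : ℝ × ℝ | p ∈ triangleSI ∧ p.2 < bhplus ν p.1} ∪ triangleSIᶜ := by
    intro p hp
    by_cases ht : p ∈ triangleSI
    · obtain ⟨hx0, hxy, hy1⟩ := ht
      left
      refine ⟨⟨hx0, hxy, hy1⟩, ?_⟩
      by_contra hc
      exact hp ⟨h0le p.1 hx0, not_lt.mp hc, hy1⟩
    · exact Or.inr ht
  have hGc0 : μ Gᶜ = 0 := by
    refine measure_mono_null hGc ?_
    exact le_antisymm (le_trans (measure_union_le _ _) (by rw [hB, hμ]; simp)) bot_le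
  have hle : μ Set.univ ≤ μ G + μ Gᶜ := by
    rw [← Set.union_compl_self G]; exact measure_union_le _ _
  rw [measure_univ, hGc0, add_zero] at hle
  exact le_antisymm prob_le_one hle
end

section
/- Let g : [0,1] → [0,1] be weakly increasing, right-continuous, with g(x) ≥ x for all x. Define W_g⁻(x) = λ{y ∈ [0,1] : g(y) < x}, where λ is Lebesgue measure. Then for all x, t ∈ [0,1]: W_g⁻(x) ≤ t if and only if g(t) ≥ x. -/
/-!
By monotonicity the sublevel set `{y | g y < x}` is an initial segment of `[0,1]`. If `x ≤ g t`
it lies in `[0,t)`, so its measure is at most `t`; if `g t < x`, right-continuity keeps `g < x`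
slightly beyond `t`, so the set contains some `[0,v)` with `v > t`. At `t = 1` the first case is
forced, since `g 1 ≥ 1`.
-/

open MeasureTheory Set

section SublevelSet

variable {g : ℝ → ℝ} {a b t x : ℝ}

theorem setOf_lt_subset_Ico_of_le_apply (hmono : MonotoneOn g (Icc a b)) (ht : t ∈ Icc a b)
    (hx : x ≤ g t) : {y ∈ Icc a b | g y < x} ⊆ Ico a t := by
  rintro y ⟨hy, hgy⟩
  refine ⟨hy.1, lt_of_not_ge fun hty => ?_⟩
  linarith [hmono ht hy hty]

theorem exists_Ico_subset_setOf_lt (hmono : MonotoneOn g (Icc a b))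
    (hrc : ContinuousWithinAt g (Ici t) t) (ht : t ∈ Ico a b) (hx : g t < x) :
    ∃ v, t < v ∧ v ≤ b ∧ Ico a v ⊆ {y ∈ Icc a b | g y < x} := by
  obtain ⟨u, htu, hu⟩ := mem_nhdsGE_iff_exists_Ico_subset.mp (hrc.eventually_lt_const hx)
  refine ⟨min u b, lt_min htu ht.2, min_le_right _ _, fun y hy => ?_⟩
  have hyb : y < b := hy.2.trans_le (min_le_right _ _)
  refine ⟨⟨hy.1, hyb.le⟩, ?_⟩
  rcases lt_or_ge y t with hyt | hty
  · exact (hmono ⟨hy.1, hyb.le⟩ (Ico_subset_Icc_self ht) hyt.le).trans_lt hx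
  · exact hu ⟨hty, hy.2.trans_le (min_le_left _ _)⟩

theorem volume_setOf_lt_le_of_le_apply (hmono : MonotoneOn g (Icc a b)) (ht : t ∈ Icc a b)
    (hx : x ≤ g t) : volume {y ∈ Icc a b | g y < x} ≤ ENNReal.ofReal (t - a) :=
  Real.volume_Ico (a := a) ▸ measure_mono (setOf_lt_subset_Ico_of_le_apply hmono ht hx)

theorem ofReal_lt_volume_setOf_lt (hmono : MonotoneOn g (Icc a b))
    (hrc : ContinuousWithinAt g (Ici t) t) (ht : t ∈ Ico a b) (hx : g t < x) :
    ENNReal.ofReal (t - a) < volume {y ∈ Icc a b | g y < x} := by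
  obtain ⟨v, htv, -, hsub⟩ := exists_Ico_subset_setOf_lt hmono hrc ht hx
  calc ENNReal.ofReal (t - a) < ENNReal.ofReal (v - a) :=
        (ENNReal.ofReal_lt_ofReal_iff (by linarith [ht.1])).mpr (by linarith)
    _ = volume (Ico a v) := Real.volume_Ico.symm
    _ ≤ _ := measure_mono hsub

end SublevelSet

theorem Wgminus_le_iff_general (g : ℝ → ℝ)
    (hmono : MonotoneOn g (Set.Icc (0:ℝ) 1))
    (hrc : ∀ x ∈ Set.Ico (0:ℝ) 1, ContinuousWithinAt g (Set.Ici x) x)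
    (hge : ∀ x ∈ Set.Icc (0:ℝ) 1, x ≤ g x) :
    ∀ x ∈ Set.Icc (0:ℝ) 1, ∀ t ∈ Set.Icc (0:ℝ) 1,
      ((volume {y ∈ Set.Icc (0:ℝ) 1 | g y < x}).toReal ≤ t ↔ x ≤ g t) := by
  intro x hx t ht
  have hfin : volume {y ∈ Icc (0:ℝ) 1 | g y < x} ≠ ⊤ :=
    ((measure_mono (sep_subset _ _)).trans_lt measure_Icc_lt_top).ne
  rw [← ENNReal.le_ofReal_iff_toReal_le hfin ht.1]
  refine ⟨fun hle => le_of_not_gt fun hgt => ?_, fun hxt => ?_⟩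
  · rcases ht.2.lt_or_eq with ht1 | rfl
    · have hlt := ofReal_lt_volume_setOf_lt hmono (hrc t ⟨ht.1, ht1⟩) ⟨ht.1, ht1⟩ hgt
      rw [sub_zero] at hlt
      exact hlt.not_ge hle
    · linarith [hge 1 ht, hx.2]
  · simpa only [sub_zero] using volume_setOf_lt_le_of_le_apply hmono ht hxt

/-- For `g : [0,1] → [0,1]` weakly increasing, right-continuous, with `g(x) ≥ x`,
and `W_g⁻(x) = λ{y ∈ [0,1] : g(y) < x}`:  `W_g⁻(x) ≤ t ↔ g(t) ≥ x`
for all `x, t ∈ [0,1]`. -/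
theorem Wgminus_le_iff (g : ℝ → ℝ)
    (hmono : MonotoneOn g (Set.Icc (0:ℝ) 1))
    (hrc : ∀ x ∈ Set.Ico (0:ℝ) 1, ContinuousWithinAt g (Set.Ici x) x)
    (hmem : ∀ x ∈ Set.Icc (0:ℝ) 1, g x ∈ Set.Icc (0:ℝ) 1)
    (hge : ∀ x ∈ Set.Icc (0:ℝ) 1, x ≤ g x) :
    ∀ x ∈ Set.Icc (0:ℝ) 1, ∀ t ∈ Set.Icc (0:ℝ) 1,
      ((volume {y ∈ Set.Icc (0:ℝ) 1 | g y < x}).toReal ≤ t ↔ x ≤ g t) :=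
  Wgminus_le_iff_general g hmono hrc hge
end

section
/- Let g : [0,1] → [0,1] be weakly increasing, right-continuous, with g(x) ≥ x everywhere, and define F₊(t) = λ{x : 1 − g(x) ≤ t}. Then g can be recovered from F₊ by the inversion formula g(x) = 1 − min{t : 1 − F₊(t) ≤ x} = max{s : F₊(1 − s) ≥ 1 − x} for all x ∈ [0,1]. -/
open MeasureTheory Set

/-!
The superlevel set `{u ∈ [0,1] | s ≤ g u}` of a monotone `g` contains `[x, 1]` as soon as
`s ≤ g x`, and by right-continuity it misses a right neighbourhood of `x` when `g x < s`.
So its measure is at least `1 - x` exactly when `s ≤ g x`, and `g x` is the largest such `s`.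
Since `F₊(t)` is the measure of the superlevel set at height `1 - t`, both formulas follow.
-/

theorem exists_gt_superlevel_subset_Ici {α β : Type*} [LinearOrder α] [TopologicalSpace α]
    [OrderTopology α] [NoMaxOrder α] [LinearOrder β] [TopologicalSpace β] [OrderTopology β]
    {g : α → β} {S : Set α} {x : α} {s : β} (hmono : MonotoneOn g S) (hx : x ∈ S)
    (hrc : ContinuousWithinAt g (Ici x) x) (hs : g x < s) :
    ∃ y, x < y ∧ {u ∈ S | s ≤ g u} ⊆ Ici y := by
  obtain ⟨y, hxy, hIco⟩ := mem_nhdsGE_iff_exists_Ico_subset.mp (hrc (Iio_mem_nhds hs))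
  refine ⟨y, hxy, fun u ⟨huS, hsu⟩ => ?_⟩
  by_contra huy
  rw [mem_Ici, not_le] at huy
  rcases le_or_gt x u with hxu | hux
  · exact (hIco ⟨hxu, huy⟩ : g u < s).not_ge hsu
  · exact (hmono huS hx hux.le |>.trans_lt hs).not_ge hsu

theorem le_volume_real_superlevel_iff {g : ℝ → ℝ} {x s : ℝ}
    (hmono : MonotoneOn g (Icc 0 1))
    (hrc : ∀ x ∈ Ico (0:ℝ) 1, ContinuousWithinAt g (Ici x) x)
    (hg_one : 1 ≤ g 1) (hx : x ∈ Icc (0:ℝ) 1) (hs : s ≤ 1) :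
    1 - x ≤ volume.real {u ∈ Icc (0:ℝ) 1 | s ≤ g u} ↔ s ≤ g x := by
  have hfin : volume {u ∈ Icc (0:ℝ) 1 | s ≤ g u} ≠ ⊤ :=
    ((measure_mono (sep_subset _ _)).trans_lt measure_Icc_lt_top).ne
  constructor
  · intro hvol
    by_contra! hlt
    rcases hx.2.eq_or_lt with rfl | hx_lt
    · linarith
    obtain ⟨y, hxy, hsub⟩ :=
      exists_gt_superlevel_subset_Ici hmono hx (hrc x ⟨hx.1, hx_lt⟩) hlt
    have hle : volume.real {u ∈ Icc (0:ℝ) 1 | s ≤ g u} ≤ volume.real (Icc y 1) :=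
      measureReal_mono (fun u hu => ⟨hsub hu, hu.1.2⟩) measure_Icc_lt_top.ne
    rw [Real.volume_real_Icc] at hle
    have : max (1 - y) 0 < 1 - x := max_lt (by linarith) (by linarith)
    linarith
  · intro hsx
    calc 1 - x = volume.real (Icc x 1) := (Real.volume_real_Icc_of_le hx.2).symm
      _ ≤ volume.real {u ∈ Icc (0:ℝ) 1 | s ≤ g u} := measureReal_mono
          (fun u hu => ⟨⟨hx.1.trans hu.1, hu.2⟩, hsx.trans (hmono hx ⟨hx.1.trans hu.1, hu.2⟩ hu.1)⟩)
          hfin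

/-- For `g : [0,1] → [0,1]` weakly increasing, right-continuous, with `g(x) ≥ x`, and
`F₊(t) = λ{x ∈ [0,1] : 1 − g(x) ≤ t}`, the function `g` is recovered by the inversion
formula `g(x) = 1 − min{t : 1 − F₊(t) ≤ x} = max{s : F₊(1 − s) ≥ 1 − x}`. -/
theorem inversion_formula (g : ℝ → ℝ)
    (hmono : MonotoneOn g (Set.Icc (0:ℝ) 1))
    (hrc : ∀ x ∈ Set.Ico (0:ℝ) 1, ContinuousWithinAt g (Set.Ici x) x)
    (hmem : ∀ x ∈ Set.Icc (0:ℝ) 1, g x ∈ Set.Icc (0:ℝ) 1)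
    (hge : ∀ x ∈ Set.Icc (0:ℝ) 1, x ≤ g x) :
    ∀ x ∈ Set.Icc (0:ℝ) 1,
      g x = 1 - sInf {t ∈ Set.Icc (0:ℝ) 1 |
          1 - (volume {u ∈ Set.Icc (0:ℝ) 1 | 1 - g u ≤ t}).toReal ≤ x} ∧
      g x = sSup {s ∈ Set.Icc (0:ℝ) 1 |
          1 - x ≤ (volume {u ∈ Set.Icc (0:ℝ) 1 | 1 - g u ≤ 1 - s}).toReal} := by
  intro x hx
  have hF : ∀ t, 0 ≤ t →
      (1 - x ≤ (volume {u ∈ Icc (0:ℝ) 1 | 1 - g u ≤ t}).toReal ↔ 1 - t ≤ g x) := by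
    intro t ht
    simp_rw [sub_le_comm (a := (1:ℝ)) (c := t)]
    exact le_volume_real_superlevel_iff hmono hrc (hge 1 ⟨zero_le_one, le_rfl⟩) hx (by linarith)
  obtain ⟨hgx0, hgx1⟩ := hmem x hx
  have hleast : IsLeast {t ∈ Icc (0:ℝ) 1 |
      1 - (volume {u ∈ Icc (0:ℝ) 1 | 1 - g u ≤ t}).toReal ≤ x} (1 - g x) := by
    refine ⟨⟨⟨by linarith, by linarith⟩, ?_⟩, fun t ⟨ht, hFt⟩ => ?_⟩
    · linarith [(hF (1 - g x) (by linarith)).mpr (by linarith)]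
    · linarith [(hF t ht.1).mp (by linarith)]
  have hgreatest : IsGreatest {s ∈ Icc (0:ℝ) 1 |
      1 - x ≤ (volume {u ∈ Icc (0:ℝ) 1 | 1 - g u ≤ 1 - s}).toReal} (g x) := by
    refine ⟨⟨⟨hgx0, hgx1⟩, (hF _ (by linarith)).mpr (by linarith)⟩, fun s ⟨hs, hFs⟩ => ?_⟩
    linarith [(hF _ (by linarith [hs.2])).mp hFs]
  exact ⟨by rw [hleast.csInf_eq]; ring, hgreatest.csSup_eq.symm⟩
end
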